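/- Let T ≥ 1 and pe : ℕ → ℕ → ℝ. Define the value function V by backward recursion: for a current model index i and time t ∈ {1,…,T}, V(T+1, i) = 0, and V(t, i) = min( α + pe(t, t) + V(t+1, t), pe(i, t) + V(t+1, i) ). Then V(1, 0) = min over all schedules S ⊆ {1,…,T} of C_α(S) = α·|S| + Σ_{t=1}^T pe(r_S(t), t). -/

import Mathlib

/-- The most recent retrain time at or before `t` (0 if none). -/
def rS (S : Finset ℕ) (t : ℕ) : ℕ := (S.filter (· ≤ t)).sup id

/-- Total cost of a retraining schedule `S`. -/
noncomputable def cost (α : ℝ) (pe : ℕ → ℕ → ℝ) (T : ℕ) (S : Finset ℕ) : ℝ :=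
  α * S.card + ∑ t ∈ Finset.Icc 1 T, pe (rS S t) t

/-- Fuel-indexed value function: `Vaux α pe k t i` is the optimal cost-to-go from time `t`
with current model `i` when `k` timesteps remain (so `V t i = Vaux (T + 1 - t) t i`);
`Vaux 0 t i = 0` encodes the boundary condition `V (T+1) i = 0`, and one step of fuel
encodes the Bellman recursion
`V t i = min (α + pe t t + V (t+1) t) (pe i t + V (t+1) i)`. -/
noncomputable def Vaux (α : ℝ) (pe : ℕ → ℕ → ℝ) : ℕ → ℕ → ℕ → ℝ
  | 0, _, _ => 0
  | k + 1, t, i =>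
      min (α + pe t t + Vaux α pe k (t + 1) t) (pe i t + Vaux α pe k (t + 1) i)

/-! Generalise to an arbitrary state `(t, i)` with `i ≤ t` and `k` steps left. The schedules of
`{t, …, t + k}` are those of `{t + 1, …, t + k}` together with their insertions of `t`
(`Finset.powerset_insert`); on the first family the cost is `pe i t` plus a cost from state
`(t + 1, i)`, on the second it is `α + pe t t` plus a cost from state `(t + 1, t)`. So the minimum
over schedules satisfies the same Bellman recursion as `Vaux`. -/

open Finset

theorem sum_Ico_add_succ {M : Type*} [AddCommMonoid M] (t k : ℕ) (f : ℕ → M) :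
    ∑ u ∈ Ico t (t + (k + 1)), f u = f t + ∑ u ∈ Ico (t + 1) (t + 1 + k), f u := by
  rw [sum_eq_sum_Ico_succ_bot (by omega), Nat.add_right_comm, ← add_assoc]

theorem add_inf' {β M : Type*} [LinearOrder M] [Add M] [AddLeftMono M] (s : Finset β)
    (H : s.Nonempty) (c : M) (f : β → M) : c + s.inf' H f = s.inf' H (fun x => c + f x) :=
  apply_inf'_eq_inf'_comp H (c + ·) fun x y => (min_add_add_left c x y).symm

theorem rS_le (S : Finset ℕ) (u : ℕ) : rS S u ≤ u :=
  Finset.sup_le fun _ hs => (mem_filter.mp hs).2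

theorem rS_eq_zero_of_forall_lt {S : Finset ℕ} {u : ℕ} (h : ∀ s ∈ S, u < s) : rS S u = 0 := by
  rw [rS, filter_false_of_mem fun s hs => not_le.mpr (h s hs), sup_empty, Nat.bot_eq_zero]

theorem rS_insert_of_le (S : Finset ℕ) {a u : ℕ} (h : a ≤ u) :
    rS (insert a S) u = max a (rS S u) := by
  rw [rS, filter_insert, if_pos h, sup_insert]
  rfl

/-- Cost of the schedule `S` over the `k` steps `t, …, t + k - 1`, starting with model `i`
in use; for `i < t` the model in use at time `u` is `max i (rS S u)`. -/
noncomputable def costFrom (α : ℝ) (pe : ℕ → ℕ → ℝ) (k t i : ℕ) (S : Finset ℕ) : ℝ :=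
  α * #S + ∑ u ∈ Ico t (t + k), pe (max i (rS S u)) u

theorem cost_eq_costFrom (α : ℝ) (pe : ℕ → ℕ → ℝ) (T : ℕ) (S : Finset ℕ) :
    cost α pe T S = costFrom α pe T 1 0 S := by
  rw [cost, costFrom, add_comm 1 T, Ico_add_one_right_eq_Icc]
  simp only [Nat.zero_max]

section costFrom

variable (α : ℝ) (pe : ℕ → ℕ → ℝ) (k t i : ℕ) {S : Finset ℕ}

theorem costFrom_succ_keep (hS : ∀ s ∈ S, t < s) :
    costFrom α pe (k + 1) t i S = pe i t + costFrom α pe k (t + 1) i S := by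
  rw [costFrom, costFrom, sum_Ico_add_succ, rS_eq_zero_of_forall_lt hS, Nat.max_zero]
  ring

theorem costFrom_succ_retrain (hi : i ≤ t) (hS : t ∉ S) :
    costFrom α pe (k + 1) t i (insert t S) = α + pe t t + costFrom α pe k (t + 1) t S := by
  have model : ∀ u, t ≤ u → max i (rS (insert t S) u) = max t (rS S u) := fun u hu => by
    rw [rS_insert_of_le S hu, ← max_assoc, max_eq_right hi]
  rw [costFrom, costFrom, card_insert_of_notMem hS, sum_Ico_add_succ, model t le_rfl,
    max_eq_left (rS_le S t), sum_congr rfl fun u hu => by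
      rw [model u (Nat.le_of_succ_le (mem_Ico.mp hu).1)]]
  push_cast
  ring

theorem Vaux_eq_inf'_costFrom (hi : i ≤ t) :
    Vaux α pe k t i =
      (Ico t (t + k)).powerset.inf' (powerset_nonempty _) (costFrom α pe k t i) := by
  induction k generalizing t i with
  | zero => simp [Vaux, costFrom]
  | succ k ih =>
    set X := Ico (t + 1) (t + 1 + k)
    have hX : X.powerset.Nonempty := powerset_nonempty X
    have later : ∀ S ∈ X.powerset, ∀ s ∈ S, t < s := fun S hS s hs =>
      (mem_Ico.mp (mem_powerset.mp hS hs)).1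
    have hIco : insert t X = Ico t (t + (k + 1)) := by
      rw [insert_Ico_add_one_left_eq_Ico (by omega), Nat.add_right_comm]
      rfl
    calc Vaux α pe (k + 1) t i
        = min (α + pe t t + Vaux α pe k (t + 1) t) (pe i t + Vaux α pe k (t + 1) i) := rfl
      _ = min (X.powerset.inf' hX fun S => costFrom α pe (k + 1) t i (insert t S))
            (X.powerset.inf' hX (costFrom α pe (k + 1) t i)) := by
        rw [ih (t + 1) t (Nat.le_succ t), ih (t + 1) i (hi.trans (Nat.le_succ t)),
          add_inf', add_inf']
        congr 1
        · exact inf'_congr hX rfl fun S hS => (costFrom_succ_retrain α pe k t i hi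
            fun ht => (later S hS t ht).false).symm
        · exact inf'_congr hX rfl fun S hS => (costFrom_succ_keep α pe k t i (later S hS)).symm
      _ = (X.powerset ∪ X.powerset.image (insert t)).inf' (hX.mono subset_union_left)
            (costFrom α pe (k + 1) t i) := by
        rw [inf'_union hX (hX.image _), inf'_image, min_comm]
        rfl
      _ = _ := inf'_congr _ ((powerset_insert X t).symm.trans (congrArg powerset hIco))
            fun _ _ => rfl

end costFrom

theorem stmt14 (T : ℕ) (α : ℝ) (pe : ℕ → ℕ → ℝ) :
    Vaux α pe T 1 0
      = (Finset.Icc 1 T).powerset.inf' ⟨∅, by simp⟩ (fun S => cost α pe T S) := by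
  rw [Vaux_eq_inf'_costFrom α pe T 1 0 (Nat.zero_le 1)]
  exact inf'_congr _ (by rw [add_comm 1 T, Ico_add_one_right_eq_Icc])
    fun S _ => (cost_eq_costFrom α pe T S).symm
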